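/- Let m be a positive integer and a an integer with a > m. Then ∑_{k=1}^{m} ψ₀²(k)/(a+1-k) = ∑_{k=1}^{m} ( ψ₀²(k+a-m)/k + ψ₀²(k)/(k+a-m) + ψ₁(k+a-m)/(k+a-m) ) + (2/(a-m) - 2ψ₀(a+1))·∑_{k=1}^{m} ψ₀(k+a-m)/k + (1/(a-m)²)·(ψ₀(a-m+1) - ψ₀(a+1) + ψ₀(m+1) - ψ₀(1)) + (1/(a-m))·( 2ψ₀(a+1)·(-ψ₀(a-m+1) - ψ₀(m+1) + ψ₀(1)) + ψ₀²(a-m+1) + ψ₀²(a+1) ) + (1/6)·( -6ψ₀²(a+1)·(ψ₀(a-m+1) - ψ₀(m+1)) - 6ψ₀(a+1)·(-ψ₀²(a-m+1) + 2ψ₀(1)·ψ₀(a-m+1) + ψ₁(a-m+1)) - 2ψ₀³(a-m+1) + 6ψ₀(1)·ψ₀²(a-m+1) - 6ψ₀(1)·ψ₁(a-m+1) + 6ψ₀(a-m+1)·ψ₁(a-m+1) + ψ₂(a-m+1) + 2ψ₀³(a+1) + 6ψ₀(1)·ψ₁(a+1) - ψ₂(a+1) ). -/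

import Mathlib

open Finset

/-- Digamma function at a positive integer argument: `ψ₀ l = -γ + ∑_{i=1}^{l-1} 1/i`. -/
noncomputable def ψ₀ (l : ℕ) : ℝ :=
  -Real.eulerMascheroniConstant + ∑ i ∈ Finset.range (l - 1), (1 : ℝ) / (i + 1)

/-- Trigamma function at a positive integer argument: `ψ₁ l = π²/6 - ∑_{i=1}^{l-1} 1/i²`. -/
noncomputable def ψ₁ (l : ℕ) : ℝ :=
  Real.pi ^ 2 / 6 - ∑ i ∈ Finset.range (l - 1), (1 : ℝ) / (i + 1) ^ 2

/-- Tetragamma function at a positive integer argument: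
`ψ₂ l = -2ζ(3) + 2∑_{i=1}^{l-1} 1/i³`, where `ζ(3) = ∑_{i=1}^∞ 1/i³`. -/
noncomputable def ψ₂ (l : ℕ) : ℝ :=
  -2 * (∑' i : ℕ, (1 : ℝ) / (i + 1) ^ 3) +
    2 * ∑ i ∈ Finset.range (l - 1), (1 : ℝ) / (i + 1) ^ 3

/-!
Put `d = a - m` and `S m = ∑_{j=1}^{m} ψ₀(j)² / (m + d + 1 - j)`, and induct on `m` with `d` fixed.
Passing from `m` to `m + 1` replaces `ψ₀(j)` by `ψ₀(j) + 1/j` in every term, and the partial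
fraction `1 / (j (N - j)) = (1/j + 1/(N - j)) / N`, `N = m + d + 1`, turns the increment into
telescoping sums (`∑ 1/j`, `∑ 1/j²`, and `∑ ψ₀(j)/j`, a difference of `(ψ₀² + ψ₁)/2`) plus the
first-power analogue `∑_{j=1}^{m} ψ₀(j) / (m + d + 1 - j)`, whose closed form is found the same way.
-/

-- At `j = 0` this holds because `ψ₀ 0 = ψ₀ 1` and `1 / 0 = 0`; likewise for `ψ₁`, `ψ₂`.
theorem ψ₀_succ (j : ℕ) : ψ₀ (j + 1) = ψ₀ j + 1 / (j : ℝ) := by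
  cases j with
  | zero => simp [ψ₀]
  | succ j => simp only [ψ₀, add_tsub_cancel_right, sum_range_succ]; push_cast; ring

theorem ψ₁_succ (j : ℕ) : ψ₁ (j + 1) = ψ₁ j - 1 / (j : ℝ) ^ 2 := by
  cases j with
  | zero => simp [ψ₁]
  | succ j => simp only [ψ₁, add_tsub_cancel_right, sum_range_succ]; push_cast; ring

theorem ψ₂_succ (j : ℕ) : ψ₂ (j + 1) = ψ₂ j + 2 / (j : ℝ) ^ 3 := by
  cases j with
  | zero => simp [ψ₂]
  | succ j => simp only [ψ₂, add_tsub_cancel_right, sum_range_succ]; push_cast; ring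

theorem sum_range_one_div_add (c m : ℕ) :
    ∑ k ∈ range m, 1 / ((k : ℝ) + 1 + c) = ψ₀ (m + c + 1) - ψ₀ (c + 1) := by
  refine sum_range_induction _ (fun n ↦ ψ₀ (n + c + 1) - ψ₀ (c + 1)) (by simp) m fun k _ ↦ ?_
  rw [show k + 1 + c + 1 = k + c + 1 + 1 by ring, ψ₀_succ]
  push_cast; ring

theorem sum_range_one_div_sq (m : ℕ) :
    ∑ k ∈ range m, 1 / ((k : ℝ) + 1) ^ 2 = ψ₁ 1 - ψ₁ (m + 1) := by
  refine sum_range_induction _ (fun n ↦ ψ₁ 1 - ψ₁ (n + 1)) (by simp) m fun k _ ↦ ?_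
  rw [ψ₁_succ (k + 1)]
  push_cast; ring

theorem sum_range_ψ₀_div (m : ℕ) :
    ∑ k ∈ range m, ψ₀ (k + 1) / ((k : ℝ) + 1) =
      (ψ₀ (m + 1) ^ 2 + ψ₁ (m + 1) - ψ₀ 1 ^ 2 - ψ₁ 1) / 2 := by
  refine sum_range_induction _ (fun n ↦ (ψ₀ (n + 1) ^ 2 + ψ₁ (n + 1) - ψ₀ 1 ^ 2 - ψ₁ 1) / 2)
    (by simp) m fun k _ ↦ ?_
  rw [ψ₀_succ (k + 1), ψ₁_succ (k + 1)]
  push_cast; field_simp; ring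

theorem sum_range_sub_eq_sum_range_succ {M : Type*} [AddCommMonoid M] (f : ℕ → M) (m : ℕ) :
    ∑ k ∈ range m, f (m - k) = ∑ k ∈ range m, f (k + 1) := by
  rw [← sum_range_reflect]
  refine sum_congr rfl fun k hk ↦ ?_
  rw [mem_range] at hk
  congr 1; omega

/-- `∑_{j=1}^{m} f j / (m + d + 1 - j)` (see `sum_Icc_eq_convSum`), indexed by `k = m - j` so that
the denominators do not depend on `m`. -/
noncomputable def convSum (f : ℕ → ℝ) (d m : ℕ) : ℝ :=
  ∑ k ∈ range m, f (m - k) / ((k : ℝ) + 1 + d)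

theorem sum_Icc_eq_convSum (f : ℕ → ℝ) (d m : ℕ) :
    ∑ j ∈ Icc 1 m, f j / ((m + d + 1 - j : ℕ) : ℝ) = convSum f d m := by
  rw [← Ico_add_one_right_eq_Icc, sum_Ico_eq_sum_range, Nat.add_sub_cancel, convSum,
    ← sum_range_reflect]
  refine sum_congr rfl fun k hk ↦ ?_
  rw [mem_range] at hk
  rw [show 1 + (m - 1 - k) = m - k by omega, show m + d + 1 - (m - k) = k + 1 + d by omega]
  push_cast
  rfl

theorem convSum_add (f g : ℕ → ℝ) (d m : ℕ) :
    convSum (fun j ↦ f j + g j) d m = convSum f d m + convSum g d m := by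
  simp only [convSum, add_div, sum_add_distrib]

theorem convSum_const_mul (c : ℝ) (f : ℕ → ℝ) (d m : ℕ) :
    convSum (fun j ↦ c * f j) d m = c * convSum f d m := by
  simp only [convSum, mul_div_assoc, mul_sum]

theorem convSum_succ (f : ℕ → ℝ) (d m : ℕ) :
    convSum f d (m + 1) =
      convSum f d m + convSum (fun j ↦ f (j + 1) - f j) d m + f 1 / ((m : ℝ) + 1 + d) := by
  have hsucc : ∀ k ∈ range m, f (m + 1 - k) / ((k : ℝ) + 1 + d) =
      f (m - k) / ((k : ℝ) + 1 + d) + (f (m - k + 1) - f (m - k)) / ((k : ℝ) + 1 + d) := by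
    intro k hk
    rw [mem_range] at hk
    rw [show m + 1 - k = m - k + 1 by omega, ← add_div]; ring
  rw [convSum, sum_range_succ, sum_congr rfl hsucc, sum_add_distrib, Nat.add_sub_cancel_left]
  rfl

-- partial fractions `1 / (j (N - j)) = (1 / j + 1 / (N - j)) / N` with `N = m + d + 1`
theorem convSum_div (h : ℕ → ℝ) (d m : ℕ) :
    convSum (fun j ↦ h j / j) d m =
      (∑ k ∈ range m, h (k + 1) / ((k : ℝ) + 1) + convSum h d m) / ((m : ℝ) + 1 + d) := by
  have hterm : ∀ k ∈ range m, h (m - k) / ((m - k : ℕ) : ℝ) / ((k : ℝ) + 1 + d) =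
      (h (m - k) / ((m - k : ℕ) : ℝ) + h (m - k) / ((k : ℝ) + 1 + d)) / ((m : ℝ) + 1 + d) := by
    intro k hk
    rw [mem_range] at hk
    rw [Nat.cast_sub hk.le]
    have hmk : (m : ℝ) - k ≠ 0 := sub_ne_zero.2 (by exact_mod_cast hk.ne')
    field_simp
    ring
  rw [convSum, sum_congr rfl hterm, ← sum_div, sum_add_distrib,
    sum_range_sub_eq_sum_range_succ (fun j ↦ h j / (j : ℝ))]
  push_cast
  rfl

theorem convSum_one (d m : ℕ) : convSum (fun _ ↦ 1) d m = ψ₀ (m + d + 1) - ψ₀ (d + 1) :=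
  sum_range_one_div_add d m

theorem convSum_one_div (d m : ℕ) :
    convSum (fun j ↦ 1 / (j : ℝ)) d m =
      (ψ₀ (m + 1) - ψ₀ 1 + ψ₀ (m + d + 1) - ψ₀ (d + 1)) / ((m : ℝ) + 1 + d) := by
  have hharmonic := sum_range_one_div_add 0 m
  simp only [CharP.cast_eq_zero, add_zero, zero_add] at hharmonic
  rw [convSum_div (fun _ ↦ 1), convSum_one, hharmonic]
  ring

theorem convSum_ψ₀_succ (d m : ℕ) :
    convSum ψ₀ d (m + 1) = convSum ψ₀ d m +
      (ψ₀ (m + 1) + ψ₀ (m + d + 1) - ψ₀ (d + 1)) / ((m : ℝ) + 1 + d) := by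
  have hdiff : (fun j ↦ ψ₀ (j + 1) - ψ₀ j) = fun j : ℕ ↦ 1 / (j : ℝ) := by
    funext j; rw [ψ₀_succ]; ring
  rw [convSum_succ, hdiff, convSum_one_div]
  ring

theorem convSum_ψ₀_sq_succ (d m : ℕ) :
    convSum (fun j ↦ ψ₀ j ^ 2) d (m + 1) = convSum (fun j ↦ ψ₀ j ^ 2) d m +
      (ψ₀ (m + 1) ^ 2 + 2 * convSum ψ₀ d m +
        (ψ₀ (m + 1) - ψ₀ 1 + ψ₀ (m + d + 1) - ψ₀ (d + 1)) / ((m : ℝ) + 1 + d)) /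
        ((m : ℝ) + 1 + d) := by
  have hdiff :
      (fun j ↦ ψ₀ (j + 1) ^ 2 - ψ₀ j ^ 2) = fun j : ℕ ↦ (2 * ψ₀ j + 1 / (j : ℝ)) / j := by
    funext j; rw [ψ₀_succ]; ring
  have hsum : ∑ k ∈ range m, (2 * ψ₀ (k + 1) + 1 / ((k + 1 : ℕ) : ℝ)) / ((k : ℝ) + 1) =
      2 * ∑ k ∈ range m, ψ₀ (k + 1) / ((k : ℝ) + 1) + ∑ k ∈ range m, 1 / ((k : ℝ) + 1) ^ 2 := by
    rw [mul_sum, ← sum_add_distrib]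
    refine sum_congr rfl fun k _ ↦ ?_
    push_cast
    field_simp
  rw [convSum_succ, hdiff, convSum_div, hsum, sum_range_ψ₀_div, sum_range_one_div_sq,
    convSum_add, convSum_const_mul, convSum_one_div]
  ring

theorem convSum_ψ₀ {d : ℕ} (hd : d ≠ 0) (m : ℕ) :
    convSum ψ₀ d m = -∑ k ∈ Icc 1 m, ψ₀ (k + d) / k +
      (ψ₀ (m + d + 1) ^ 2 + ψ₁ (m + d + 1) - ψ₀ (d + 1) ^ 2 - ψ₁ (d + 1)) / 2 +
      ψ₀ (m + d + 1) * (ψ₀ (m + 1) - ψ₀ (d + 1)) + ψ₀ (d + 1) * (ψ₀ (d + 1) - ψ₀ 1) +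
      (ψ₀ (m + d + 1) - ψ₀ (d + 1) - ψ₀ (m + 1) + ψ₀ 1) / d := by
  induction m with
  | zero =>
    simp only [convSum, range_zero, sum_empty, Icc_eq_empty_of_lt zero_lt_one, zero_add]
    ring
  | succ m ih =>
    rw [convSum_ψ₀_succ, ih, sum_Icc_succ_top (by omega),
      show m + 1 + d + 1 = m + d + 1 + 1 by ring, show m + 1 + d = m + d + 1 by ring,
      ψ₀_succ (m + d + 1), ψ₁_succ (m + d + 1), ψ₀_succ (m + 1)]
    have hd' : (d : ℝ) ≠ 0 := Nat.cast_ne_zero.2 hd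
    push_cast
    field_simp
    ring

theorem convSum_ψ₀_sq {d : ℕ} (hd : d ≠ 0) (m : ℕ) :
    convSum (fun j ↦ ψ₀ j ^ 2) d m =
      ∑ k ∈ Icc 1 m, (ψ₀ (k + d) ^ 2 / (k : ℝ) +
          ψ₀ k ^ 2 / ((k + d : ℕ) : ℝ) + ψ₁ (k + d) / ((k + d : ℕ) : ℝ)) +
        (2 / (d : ℝ) - 2 * ψ₀ (m + d + 1)) * ∑ k ∈ Icc 1 m, ψ₀ (k + d) / (k : ℝ) +
        (1 / (d : ℝ) ^ 2) * (ψ₀ (d + 1) - ψ₀ (m + d + 1) + ψ₀ (m + 1) - ψ₀ 1) +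
        (1 / (d : ℝ)) * (2 * ψ₀ (m + d + 1) * (-ψ₀ (d + 1) - ψ₀ (m + 1) + ψ₀ 1) +
            ψ₀ (d + 1) ^ 2 + ψ₀ (m + d + 1) ^ 2) +
        (1 / 6) * (-6 * ψ₀ (m + d + 1) ^ 2 * (ψ₀ (d + 1) - ψ₀ (m + 1)) -
          6 * ψ₀ (m + d + 1) * (-ψ₀ (d + 1) ^ 2 + 2 * ψ₀ 1 * ψ₀ (d + 1) + ψ₁ (d + 1)) -
          2 * ψ₀ (d + 1) ^ 3 + 6 * ψ₀ 1 * ψ₀ (d + 1) ^ 2 - 6 * ψ₀ 1 * ψ₁ (d + 1) +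
          6 * ψ₀ (d + 1) * ψ₁ (d + 1) + ψ₂ (d + 1) + 2 * ψ₀ (m + d + 1) ^ 3 +
          6 * ψ₀ 1 * ψ₁ (m + d + 1) - ψ₂ (m + d + 1)) := by
  induction m with
  | zero =>
    simp only [convSum, range_zero, sum_empty, Icc_eq_empty_of_lt zero_lt_one, zero_add]
    ring
  | succ m ih =>
    rw [convSum_ψ₀_sq_succ, ih, convSum_ψ₀ hd, sum_Icc_succ_top (by omega),
      sum_Icc_succ_top (by omega),
      show m + 1 + d + 1 = m + d + 1 + 1 by ring, show m + 1 + d = m + d + 1 by ring,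
      ψ₀_succ (m + d + 1), ψ₁_succ (m + d + 1), ψ₂_succ (m + d + 1), ψ₀_succ (m + 1)]
    have hd' : (d : ℝ) ≠ 0 := Nat.cast_ne_zero.2 hd
    push_cast
    field_simp
    ring

theorem stmt6_general (m a : ℕ) (ha : m < a) :
    ∑ k ∈ Finset.Icc 1 m, ψ₀ k ^ 2 / ((a + 1 - k : ℕ) : ℝ) =
      ∑ k ∈ Finset.Icc 1 m, (ψ₀ (k + a - m) ^ 2 / (k : ℝ) +
          ψ₀ k ^ 2 / ((k + a - m : ℕ) : ℝ) + ψ₁ (k + a - m) / ((k + a - m : ℕ) : ℝ)) +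
        (2 / ((a : ℝ) - m) - 2 * ψ₀ (a + 1)) *
          ∑ k ∈ Finset.Icc 1 m, ψ₀ (k + a - m) / (k : ℝ) +
        (1 / ((a : ℝ) - m) ^ 2) *
          (ψ₀ (a - m + 1) - ψ₀ (a + 1) + ψ₀ (m + 1) - ψ₀ 1) +
        (1 / ((a : ℝ) - m)) *
          (2 * ψ₀ (a + 1) * (-ψ₀ (a - m + 1) - ψ₀ (m + 1) + ψ₀ 1) +
            ψ₀ (a - m + 1) ^ 2 + ψ₀ (a + 1) ^ 2) +
        (1 / 6) * (-6 * ψ₀ (a + 1) ^ 2 * (ψ₀ (a - m + 1) - ψ₀ (m + 1)) -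
          6 * ψ₀ (a + 1) * (-ψ₀ (a - m + 1) ^ 2 + 2 * ψ₀ 1 * ψ₀ (a - m + 1) +
            ψ₁ (a - m + 1)) -
          2 * ψ₀ (a - m + 1) ^ 3 + 6 * ψ₀ 1 * ψ₀ (a - m + 1) ^ 2 -
          6 * ψ₀ 1 * ψ₁ (a - m + 1) + 6 * ψ₀ (a - m + 1) * ψ₁ (a - m + 1) +
          ψ₂ (a - m + 1) + 2 * ψ₀ (a + 1) ^ 3 + 6 * ψ₀ 1 * ψ₁ (a + 1) - ψ₂ (a + 1)) := by
  obtain ⟨d, rfl⟩ : ∃ d, a = m + d := ⟨a - m, by omega⟩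
  have hshift : ∀ k, k + (m + d) - m = k + d := fun k ↦ by omega
  have hgap : ((m + d : ℕ) : ℝ) - m = d := by push_cast; ring
  simp only [hshift, Nat.add_sub_cancel_left, hgap]
  rw [sum_Icc_eq_convSum (fun j ↦ ψ₀ j ^ 2), convSum_ψ₀_sq (by omega)]

theorem stmt6 (m a : ℕ) (hm : 0 < m) (ha : m < a) :
    ∑ k ∈ Finset.Icc 1 m, ψ₀ k ^ 2 / ((a + 1 - k : ℕ) : ℝ) =
      ∑ k ∈ Finset.Icc 1 m, (ψ₀ (k + a - m) ^ 2 / (k : ℝ) +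
          ψ₀ k ^ 2 / ((k + a - m : ℕ) : ℝ) + ψ₁ (k + a - m) / ((k + a - m : ℕ) : ℝ)) +
        (2 / ((a : ℝ) - m) - 2 * ψ₀ (a + 1)) *
          ∑ k ∈ Finset.Icc 1 m, ψ₀ (k + a - m) / (k : ℝ) +
        (1 / ((a : ℝ) - m) ^ 2) *
          (ψ₀ (a - m + 1) - ψ₀ (a + 1) + ψ₀ (m + 1) - ψ₀ 1) +
        (1 / ((a : ℝ) - m)) *
          (2 * ψ₀ (a + 1) * (-ψ₀ (a - m + 1) - ψ₀ (m + 1) + ψ₀ 1) +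
            ψ₀ (a - m + 1) ^ 2 + ψ₀ (a + 1) ^ 2) +
        (1 / 6) * (-6 * ψ₀ (a + 1) ^ 2 * (ψ₀ (a - m + 1) - ψ₀ (m + 1)) -
          6 * ψ₀ (a + 1) * (-ψ₀ (a - m + 1) ^ 2 + 2 * ψ₀ 1 * ψ₀ (a - m + 1) +
            ψ₁ (a - m + 1)) -
          2 * ψ₀ (a - m + 1) ^ 3 + 6 * ψ₀ 1 * ψ₀ (a - m + 1) ^ 2 -
          6 * ψ₀ 1 * ψ₁ (a - m + 1) + 6 * ψ₀ (a - m + 1) * ψ₁ (a - m + 1) +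
          ψ₂ (a - m + 1) + 2 * ψ₀ (a + 1) ^ 3 + 6 * ψ₀ 1 * ψ₁ (a + 1) - ψ₂ (a + 1)) :=
  stmt6_general m a ha
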